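/- arXiv:math/9903142 — 8 statements merged into one kernel-verified Lean document; each statement's English description precedes it below -/
import Mathlib

section
/- Let T : X → Y be a linear operator between vector lattices satisfying condition (β). Then the kernel of T is closed under passing to principal bands: if Tx = 0 and x' ∈ {x}^dd, then Tx' = 0. In particular, the kernel of T is an order ideal: if |u| ≤ |x| and Tx = 0, then Tu = 0. -/
/-- Two elements of a vector lattice are disjoint if `|u| ⊓ |v| = 0`. -/
def disj {X : Type*} [Lattice X] [AddCommGroup X] (u v : X) : Prop := |u| ⊓ |v| = 0

/-- `a` is narrower than `b` (`a ⊲ b`): every element disjoint from `b` is disjoint from `a`;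
equivalently `a ∈ {b}^dd`. -/
def narrower {X : Type*} [Lattice X] [AddCommGroup X] (a b : X) : Prop :=
  ∀ z, disj z b → disj z a

theorem stmt4 {X Y : Type*} [Lattice X] [AddCommGroup X]
    [CovariantClass X X (· + ·) (· ≤ ·)] [Module ℝ X]
    [Lattice Y] [AddCommGroup Y]
    [CovariantClass Y Y (· + ·) (· ≤ ·)] [Module ℝ Y]
    (T : X →ₗ[ℝ] Y)
    (hβ : ∀ a b : X, narrower a b → narrower (T a) (T b)) :
    (∀ x x' : X, T x = 0 → narrower x' x → T x' = 0) ∧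
    (∀ x u : X, T x = 0 → |u| ≤ |x| → T u = 0) := by
  have key : ∀ x x' : X, T x = 0 → narrower x' x → T x' = 0 := by
    intro x x' hx hn
    have h := hβ x' x hn (T x') (by simp [disj, abs_nonneg, hx, inf_of_le_right])
    have habs : |T x'| = 0 := by simpa [disj] using h
    have h1 : T x' ≤ 0 := habs ▸ le_abs_self _
    have h2 : 0 ≤ T x' := by
      have hneg : -T x' ≤ |T x'| := by rw [abs]; exact le_sup_right
      rw [habs] at hneg
      exact neg_nonpos.mp hneg
    exact le_antisymm h1 h2
  refine ⟨key, fun x u hx hle => key x u hx fun z hz => ?_⟩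
  have h1 : |z| ⊓ |u| ≤ |z| ⊓ |x| := inf_le_inf_left _ hle
  have h2 : (0:X) ≤ |z| ⊓ |u| := le_inf (abs_nonneg _) (abs_nonneg _)
  exact le_antisymm (hz ▸ h1) h2
end

section
/- Let T : X → Y be an injective linear operator between vector lattices satisfying condition (β). Then the inverse is disjointness preserving on the range: for all x₁, x₂ ∈ X, if Tx₁ ⊥ Tx₂ in Y then x₁ ⊥ x₂ in X. -/
theorem stmt6 {X Y : Type*} [Lattice X] [AddCommGroup X]
    [CovariantClass X X (· + ·) (· ≤ ·)] [Module ℝ X]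
    [Lattice Y] [AddCommGroup Y]
    [CovariantClass Y Y (· + ·) (· ≤ ·)] [Module ℝ Y]
    (T : X →ₗ[ℝ] Y) (hinj : Function.Injective T)
    (hβ : ∀ a b : X, narrower a b → narrower (T a) (T b))
    (x₁ x₂ : X) (h : disj (T x₁) (T x₂)) : disj x₁ x₂ := by
  set w : X := |x₁| ⊓ |x₂| with hw
  have hw0 : (0 : X) ≤ w := le_inf (abs_nonneg _) (abs_nonneg _)
  have habsw : |w| = w := abs_of_nonneg hw0
  have hn : ∀ x : X, w ≤ |x| → narrower w x := by
    intro x hle z hz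
    have : |z| ⊓ |w| ≤ |z| ⊓ |x| := inf_le_inf_left _ (by rw [habsw]; exact hle)
    rw [hz] at this
    exact le_antisymm this (le_inf (abs_nonneg _) (abs_nonneg _))
  have h1 : narrower (T w) (T x₁) := hβ w x₁ (hn x₁ inf_le_left)
  have h2 : narrower (T w) (T x₂) := hβ w x₂ (hn x₂ inf_le_right)
  -- T x₁ disjoint from T x₂, hence disjoint from T w
  have h3 : disj (T x₁) (T w) := h2 (T x₁) h
  have h4 : disj (T w) (T x₁) := by unfold disj at h3 ⊢; rwa [inf_comm]
  have h5 : disj (T w) (T w) := h1 (T w) h4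
  have h6 : T w = 0 := by
    unfold disj at h5
    rw [inf_idem] at h5
    have hle1 : T w ≤ 0 := h5 ▸ le_abs_self _
    have hle2 : -(T w) ≤ 0 := h5 ▸ neg_le_abs _
    exact le_antisymm hle1 (by simpa using hle2)
  have : w = 0 := hinj (by simpa using h6)
  simpa [disj] using this
end

section
/- Let X be a vector lattice with sufficiently many components, Y a vector lattice, and T : X → Y an injective disjointness preserving linear operator. Then the inverse satisfies condition (β) on the range: for all x, x₀ ∈ X, if Tx ⊲ Tx₀ in Y then x ⊲ x₀ in X. -/
theorem stmt9 {X Y : Type*} [Lattice X] [AddCommGroup X]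
    [CovariantClass X X (· + ·) (· ≤ ·)] [Module ℝ X]
    [Lattice Y] [AddCommGroup Y]
    [CovariantClass Y Y (· + ·) (· ≤ ·)] [Module ℝ Y]
    (hsmc : ∀ x u : X, ¬ narrower x u →
      ∃ x' : X, x' ≠ 0 ∧ |x'| ⊓ |x - x'| = 0 ∧ disj x' u)
    (T : X →ₗ[ℝ] Y) (hinj : Function.Injective T)
    (hdp : ∀ a b : X, disj a b → disj (T a) (T b))
    (x x₀ : X) (h : narrower (T x) (T x₀)) : narrower x x₀ := by
  by_contra hn
  obtain ⟨x', hx'0, hcomp, hdisj⟩ := hsmc x x₀ hn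
  -- T x' disjoint from T x₀, hence from T x
  have h1 : |T x'| ⊓ |T x| = 0 := h (T x') (hdp x' x₀ hdisj)
  -- T x' disjoint from T (x - x') = T x - T x'
  have h2 : |T x'| ⊓ |T x - T x'| = 0 := by
    have := hdp x' (x - x') hcomp
    rwa [disj, map_sub] at this
  -- conclude T x' = 0
  have habs : |T x'| ≤ |T x| + |T x - T x'| := by
    calc |T x'| = |T x + -(T x - T x')| := by rw [← sub_eq_add_neg, sub_sub_cancel]
    _ ≤ |T x| + |-(T x - T x')| := abs_add_le _ _
    _ = |T x| + |T x - T x'| := by rw [abs_neg]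
  have hle : |T x'| ≤ 0 := by
    calc |T x'| = |T x'| ⊓ (|T x| + |T x - T x'|) := (inf_eq_left.mpr habs).symm
    _ ≤ ((|T x'| ⊓ |T x|) + |T x - T x'|) ⊓ |T x'| := by
        refine le_inf ?_ inf_le_left
        calc |T x'| ⊓ (|T x| + |T x - T x'|)
            ≤ (|T x'| + |T x - T x'|) ⊓ (|T x| + |T x - T x'|) := by
              refine inf_le_inf ?_ le_rfl
              exact le_add_of_nonneg_right (abs_nonneg _)
        _ = (|T x'| ⊓ |T x|) + |T x - T x'| := (inf_add _ _ _).symm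
    _ = |T x - T x'| ⊓ |T x'| := by rw [h1, zero_add]
    _ = 0 := by rw [inf_comm, h2]
  have hT0 : T x' = 0 :=
    le_antisymm ((le_abs_self _).trans hle) (neg_nonpos.mp ((neg_le_abs (T x')).trans hle))
  exact hx'0 (hinj (by rw [hT0, map_zero]))
end

section
/- Let T : X → Y be a bijective linear operator between vector lattices, where X has sufficiently many components. Then T is disjointness preserving if and only if T⁻¹ satisfies condition (β). -/
section aux

set_option linter.unusedSectionVars false

variable {X : Type*} [Lattice X] [AddCommGroup X] [CovariantClass X X (· + ·) (· ≤ ·)]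

lemma disj_symm {a b : X} (h : disj a b) : disj b a := by
  unfold disj at *; rwa [inf_comm]

lemma disj_self_eq_zero {a : X} (h : disj a a) : a = 0 := by
  unfold disj at h
  rw [inf_idem] at h
  exact le_antisymm (h ▸ le_abs_self a) (neg_nonpos.mp (h ▸ neg_le_abs a))

/-- subadditivity of inf over nonnegative elements -/
lemma inf_add_le {a b c : X} (ha : 0 ≤ a) (hb : 0 ≤ b) (hc : 0 ≤ c) :
    a ⊓ (b + c) ≤ a ⊓ b + a ⊓ c := by
  rw [← sub_le_iff_le_add, sub_inf]
  apply sup_le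
  · calc a ⊓ (b + c) - a ≤ a - a := sub_le_sub_right inf_le_left a
      _ = 0 := sub_self a
      _ ≤ a ⊓ b := le_inf ha hb
  · refine le_inf ?_ ?_
    · calc a ⊓ (b + c) - c ≤ a + c - c := by
            refine sub_le_sub_right ?_ c
            exact inf_le_left.trans (le_add_of_nonneg_right hc)
        _ = a := add_sub_cancel_right a c
    · calc a ⊓ (b + c) - c ≤ (b + c) - c := sub_le_sub_right inf_le_right c
        _ = b := add_sub_cancel_right b c

lemma disj_sub {a b c : X} (hb : disj a b) (hc : disj a c) : disj a (b - c) := by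
  unfold disj at *
  refine le_antisymm ?_ (le_inf (abs_nonneg a) (abs_nonneg _))
  calc |a| ⊓ |b - c| ≤ |a| ⊓ (|b| + |c|) :=
        by
        refine inf_le_inf_left _ ?_
        calc |b - c| = |b + -c| := by rw [sub_eq_add_neg]
          _ ≤ |b| + |(-c)| := abs_add_le b (-c)
          _ = |b| + |c| := by rw [abs_neg]
    _ ≤ |a| ⊓ |b| + |a| ⊓ |c| :=
        inf_add_le (abs_nonneg a) (abs_nonneg b) (abs_nonneg c)
    _ = 0 := by rw [hb, hc, add_zero]

lemma disj_of_abs_le {a b c : X} (h : |c| ≤ |b|) (hab : disj a b) : disj a c := by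
  unfold disj at *
  refine le_antisymm ?_ (le_inf (abs_nonneg a) (abs_nonneg c))
  calc |a| ⊓ |c| ≤ |a| ⊓ |b| := inf_le_inf_left _ h
    _ = 0 := hab

end aux

theorem stmt11 {X Y : Type*} [Lattice X] [AddCommGroup X]
    [CovariantClass X X (· + ·) (· ≤ ·)] [Module ℝ X]
    [Lattice Y] [AddCommGroup Y]
    [CovariantClass Y Y (· + ·) (· ≤ ·)] [Module ℝ Y]
    (hsmc : ∀ x u : X, ¬ narrower x u →
      ∃ x' : X, x' ≠ 0 ∧ |x'| ⊓ |x - x'| = 0 ∧ disj x' u)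
    (T : X →ₗ[ℝ] Y) (hbij : Function.Bijective T) :
    (∀ a b : X, disj a b → disj (T a) (T b)) ↔
    (∀ x₁ x₂ : X, narrower (T x₁) (T x₂) → narrower x₁ x₂) := by
  constructor
  · -- T disjointness preserving ⇒ T⁻¹ satisfies (β)
    intro hdp x₁ x₂ hnar
    by_contra hn
    obtain ⟨x', hx0, hcomp, hdisj⟩ := hsmc x₁ x₂ hn
    -- T x' is disjoint from T x₂, hence from T x₁
    have h1 : disj (T x') (T x₁) := hnar _ (hdp _ _ hdisj)
    -- T x' is disjoint from T (x₁ - x')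
    have h2 : disj (T x') (T (x₁ - x')) := hdp _ _ hcomp
    -- hence T x' is disjoint from itself
    have h3 : disj (T x') (T x') := by
      have := disj_sub h1 h2
      rwa [map_sub, sub_sub_cancel] at this
    exact hx0 (hbij.injective (by rw [disj_self_eq_zero h3, map_zero]))
  · -- T⁻¹ satisfies (β) ⇒ T disjointness preserving
    intro hβ a b hab
    obtain ⟨z, hz⟩ := hbij.surjective (|T a| ⊓ |T b|)
    have hznn : (0 : Y) ≤ T z := hz ▸ le_inf (abs_nonneg _) (abs_nonneg _)
    have habs : |T z| = T z := abs_of_nonneg hznn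
    have hla : |T z| ≤ |T a| := by rw [habs, hz]; exact inf_le_left
    have hlb : |T z| ≤ |T b| := by rw [habs, hz]; exact inf_le_right
    have hza : narrower (T z) (T a) := fun w hw => disj_of_abs_le hla hw
    have hzb : narrower (T z) (T b) := fun w hw => disj_of_abs_le hlb hw
    have hza' : narrower z a := hβ _ _ hza
    have hzb' : narrower z b := hβ _ _ hzb
    -- b ⊥ a, so b ⊥ z, so z ⊥ b, so z ⊥ z, so z = 0
    have hbz : disj b z := hza' b (disj_symm hab)
    have hzz : disj z z := hzb' z (disj_symm hbz)
    have : z = 0 := disj_self_eq_zero hzz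
    show |T a| ⊓ |T b| = 0
    rw [← hz, this, map_zero]
end

section
/- Let T : X → Y be a bijective linear operator between vector lattices that is disjointness preserving. Then T satisfies condition (β) if and only if T⁻¹ is disjointness preserving. -/
lemma disj_symm_s12 {X : Type*} [Lattice X] [AddCommGroup X] {u v : X}
    (h : disj u v) : disj v u := by
  unfold disj at *; rwa [inf_comm]

theorem stmt12 {X Y : Type*} [Lattice X] [AddCommGroup X]
    [CovariantClass X X (· + ·) (· ≤ ·)] [Module ℝ X]
    [Lattice Y] [AddCommGroup Y]
    [CovariantClass Y Y (· + ·) (· ≤ ·)] [Module ℝ Y]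
    (T : X →ₗ[ℝ] Y) (hbij : Function.Bijective T)
    (hdp : ∀ a b : X, disj a b → disj (T a) (T b)) :
    (∀ a b : X, narrower a b → narrower (T a) (T b)) ↔
    (∀ a b : X, disj (T a) (T b) → disj a b) := by
  constructor
  · intro hβ a b h
    set c : X := |a| ⊓ |b| with hc
    have hc0 : (0 : X) ≤ c := le_inf (abs_nonneg a) (abs_nonneg b)
    have habs : |c| = c := abs_of_nonneg hc0
    have hca : narrower c a := by
      intro z hz
      unfold disj at *
      refine le_antisymm ?_ (le_inf (abs_nonneg z) (abs_nonneg c))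
      calc |z| ⊓ |c| ≤ |z| ⊓ |a| := inf_le_inf_left _ (by rw [habs]; exact inf_le_left)
        _ = 0 := hz
    have hcb : narrower c b := by
      intro z hz
      unfold disj at *
      refine le_antisymm ?_ (le_inf (abs_nonneg z) (abs_nonneg c))
      calc |z| ⊓ |c| ≤ |z| ⊓ |b| := inf_le_inf_left _ (by rw [habs]; exact inf_le_right)
        _ = 0 := hz
    have h1 : disj (T b) (T c) := hβ c a hca (T b) (disj_symm_s12 h)
    have h2 : disj (T c) (T c) := hβ c b hcb (T c) (disj_symm_s12 h1)
    have hTc : T c = 0 := by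
      have : |T c| = 0 := by unfold disj at h2; simpa using h2
      have h1 : T c ≤ 0 := this ▸ le_abs_self (T c)
      have h2 : (0:Y) ≤ T c := by
        have h3 : -T c ≤ |T c| := neg_le_abs (T c)
        rw [this] at h3
        simpa using h3
      exact le_antisymm h1 h2
    have : c = 0 := hbij.injective (by rw [hTc, map_zero])
    exact this
  · intro hinv a b hab z hz
    obtain ⟨x, rfl⟩ := hbij.surjective z
    exact hdp x a (hab x (hinv x b hz))
end

section
/- Let X and Y be vector lattices with Y Archimedean, and let T : X → Y be a linear operator satisfying condition (β₀): T sends any two elements of the same width to elements of the same width. Then T satisfies condition (β): whenever a ⊲ b in X, one has Ta ⊲ Tb in Y. -/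
section Aux

variable {X : Type*} [Lattice X] [AddCommGroup X]
  [CovariantClass X X (· + ·) (· ≤ ·)]

lemma aux_inf_add_le (x u v : X) (hx : 0 ≤ x) (hu : 0 ≤ u) (hv : 0 ≤ v) :
    x ⊓ (u + v) ≤ x ⊓ u + x ⊓ v := by
  have h1 : x ⊓ u + x ⊓ v = ((x + x) ⊓ (u + x)) ⊓ ((x + v) ⊓ (u + v)) := by
    rw [add_inf x v (x ⊓ u), inf_add x u x, inf_add x u v]
  rw [h1]
  refine le_inf (le_inf ?_ ?_) (le_inf ?_ ?_)
  · exact le_trans inf_le_left (le_add_of_nonneg_left hx)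
  · exact le_trans inf_le_left (le_add_of_nonneg_left hu)
  · exact le_trans inf_le_left (le_add_of_nonneg_right hv)
  · exact inf_le_right

lemma disj_nonneg_eq (z v : X) (h : |z| ⊓ |v| ≤ 0) : disj z v :=
  le_antisymm h (le_inf (abs_nonneg _) (abs_nonneg _))

lemma disj_mono {z u : X} (h : disj z u) {v : X} (hvu : |v| ≤ |u|) : disj z v :=
  disj_nonneg_eq z v (h ▸ inf_le_inf_left _ hvu)

lemma disj_add {z u v : X} (h1 : disj z u) (h2 : disj z v) : disj z (u + v) := by
  apply disj_nonneg_eq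
  calc |z| ⊓ |u + v| ≤ |z| ⊓ (|u| + |v|) := inf_le_inf_left _ (abs_add_le u v)
    _ ≤ |z| ⊓ |u| + |z| ⊓ |v| :=
        aux_inf_add_le _ _ _ (abs_nonneg _) (abs_nonneg _) (abs_nonneg _)
    _ ≤ 0 := by rw [h1, h2, add_zero]

lemma disj_sub_s14 {z u v : X} (h1 : disj z u) (h2 : disj z v) : disj z (u - v) := by
  have h2' : disj z (-v) := disj_mono h2 (by rw [abs_neg])
  simpa [sub_eq_add_neg] using disj_add h1 h2'

end Aux

theorem stmt14 {X Y : Type*} [Lattice X] [AddCommGroup X]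
    [CovariantClass X X (· + ·) (· ≤ ·)] [Module ℝ X]
    [Lattice Y] [AddCommGroup Y]
    [CovariantClass Y Y (· + ·) (· ≤ ·)] [Module ℝ Y]
    (harch : ∀ u v : Y, 0 ≤ u → 0 ≤ v → (∀ n : ℕ, n • u ≤ v) → u = 0)
    (T : X →ₗ[ℝ] Y)
    (hβ₀ : ∀ a b : X, (∀ z : X, disj z a ↔ disj z b) →
      (∀ z : Y, disj z (T a) ↔ disj z (T b)))
    (a b : X) (hab : narrower a b) : narrower (T a) (T b) := by
  intro z hz
  -- Key: if 0 ≤ c and c ⊲ b then z ⊥ T c.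
  have key : ∀ c : X, 0 ≤ c → narrower c b → disj z (T c) := by
    intro c hc hcb
    -- the same-width pairs (b, |b| + c) and (b, |b| + c + c)
    have samew : ∀ d : X, c ≤ d → narrower d b → (∀ w : X, disj w b ↔ disj w (|b| + d)) := by
      intro d hcd hdb w
      constructor
      · intro hw
        have hwb : disj w |b| := disj_mono hw (by rw [abs_abs])
        exact disj_add hwb (hdb w hw)
      · intro hw
        have hd : 0 ≤ d := le_trans hc hcd
        have habs : |(|b|)| ≤ |(|b| + d)| := by
          rw [abs_abs, abs_of_nonneg (add_nonneg (abs_nonneg b) hd)]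
          exact le_add_of_nonneg_right hd
        have : disj w |b| := disj_mono hw habs
        exact disj_mono this (by rw [abs_abs])
    have h1 : narrower (|b| + c) b := fun w hw =>
      ((samew c le_rfl hcb w).mp hw)
    have hcc : narrower (c + c) b := fun w hw => disj_add (hcb w hw) (hcb w hw)
    have hz1 : disj z (T (|b| + c)) := by
      have := hβ₀ b (|b| + c) (samew c le_rfl hcb) z
      -- hz : disj z (T b)
      exact this.mp hz
    have hz2 : disj z (T (|b| + (c + c))) := by
      have := hβ₀ b (|b| + (c + c)) (samew (c + c) (le_add_of_nonneg_left hc) hcc) z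
      exact this.mp hz
    have hdiff : disj z (T (|b| + (c + c)) - T (|b| + c)) := disj_sub_s14 hz2 hz1
    have heq : T (|b| + (c + c)) - T (|b| + c) = T c := by
      rw [← map_sub]
      congr 1
      abel
    rwa [heq] at hdiff
  have hposle : |a⁺| ≤ |a| := by
    rw [abs_of_nonneg (posPart_nonneg a)]
    exact sup_le (le_abs_self a) (abs_nonneg a)
  have hnegle : |a⁻| ≤ |a| := by
    rw [abs_of_nonneg (negPart_nonneg a)]
    exact sup_le (neg_le_abs a) (abs_nonneg a)
  have hp : disj z (T a⁺) :=
    key a⁺ (posPart_nonneg a) (fun w hw => disj_mono (hab w hw) hposle)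
  have hn : disj z (T a⁻) :=
    key a⁻ (negPart_nonneg a) (fun w hw => disj_mono (hab w hw) hnegle)
  have : disj z (T a⁺ - T a⁻) := disj_sub_s14 hp hn
  rwa [← map_sub, posPart_sub_negPart] at this
end

section
/- Let T : ℝ² → ℝ² be the linear operator T(a₁, a₂) = (a₁ + a₂, 0). Then T satisfies condition (β₊) (for 0 ≤ a ⊲ b one has Ta ⊲ Tb) but fails condition (β): e = (1, −1) satisfies Te = 0 while e generates the whole space as a band and T is not identically zero, so there exist a ⊲ b with Ta not ⊲ Tb. -/
lemma real_disj (x y : ℝ) : |x| ⊓ |y| = 0 ↔ x = 0 ∨ y = 0 := by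
  constructor
  · intro h
    rcases min_eq_iff.mp h with ⟨h1, _⟩ | ⟨h1, _⟩
    · exact Or.inl (abs_eq_zero.mp h1)
    · exact Or.inr (abs_eq_zero.mp h1)
  · rintro (rfl | rfl) <;> simp

lemma disj_iff (u v : ℝ × ℝ) :
    disj u v ↔ (u.1 = 0 ∨ v.1 = 0) ∧ (u.2 = 0 ∨ v.2 = 0) := by
  rw [disj, Prod.ext_iff]
  exact and_congr (real_disj u.1 v.1) (real_disj u.2 v.2)

theorem stmt15 (T : (ℝ × ℝ) →ₗ[ℝ] (ℝ × ℝ))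
    (hT : ∀ a : ℝ × ℝ, T a = (a.1 + a.2, 0)) :
    (∀ a b : ℝ × ℝ, 0 ≤ a → 0 ≤ b → narrower a b → narrower (T a) (T b)) ∧
    (T ((1 : ℝ), (-1 : ℝ)) = 0) ∧
    (∀ x : ℝ × ℝ, narrower x ((1 : ℝ), (-1 : ℝ))) ∧
    (T ≠ 0) ∧
    ¬ (∀ a b : ℝ × ℝ, narrower a b → narrower (T a) (T b)) := by
  refine ⟨?_, ?_, ?_, ?_, ?_⟩
  · intro a b ha hb hab z hz
    rw [hT] at hz ⊢
    rw [disj_iff] at hz ⊢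
    refine ⟨?_, Or.inr rfl⟩
    rcases hz.1 with h | h
    · exact Or.inl h
    · right
      have h' : b.1 + b.2 = 0 := h
      have hb1 : (0 : ℝ) ≤ b.1 := hb.1
      have hb2 : (0 : ℝ) ≤ b.2 := hb.2
      have hb1' : b.1 = 0 := by linarith
      have hb2' : b.2 = 0 := by linarith
      have haa := hab a (by rw [disj_iff]; exact ⟨Or.inr hb1', Or.inr hb2'⟩)
      rw [disj_iff] at haa
      rcases haa.1 with h1 | h1 <;> rcases haa.2 with h2 | h2 <;> rw [h1, h2, add_zero]
  · rw [hT]; norm_num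
  · intro x z hz
    rw [disj_iff] at hz ⊢
    simp only [one_ne_zero, or_false, neg_eq_zero] at hz
    exact ⟨Or.inl hz.1, Or.inl hz.2⟩
  · intro h
    have h1 : T (1, 0) = 0 := by rw [h]; rfl
    rw [hT] at h1
    simp [Prod.ext_iff] at h1
  · intro h
    have hn : narrower ((1 : ℝ), (0 : ℝ)) ((1 : ℝ), (-1 : ℝ)) := by
      intro z hz
      rw [disj_iff] at hz ⊢
      simp only [one_ne_zero, or_false, neg_eq_zero] at hz
      exact ⟨Or.inl hz.1, Or.inl hz.2⟩
    have h2 := h _ _ hn ((1 : ℝ), (0 : ℝ)) (by rw [hT, disj_iff]; norm_num)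
    rw [hT, disj_iff] at h2
    norm_num at h2
end

section
/- Let X and Y be vector lattices and T : X → Y an injective linear operator satisfying condition (β). If x₁, x₂ ∈ X and Tx₁ ⊥ Tx₂, then setting u = |x₁| ⊓ |x₂|, one has Tu = 0 and hence u = 0; i.e., the key step of Theorem 2.4: Tu belongs to both bands {T|x₁|}^dd and {T|x₂|}^dd, which are disjoint. -/
theorem stmt17 {X Y : Type*} [Lattice X] [AddCommGroup X]
    [CovariantClass X X (· + ·) (· ≤ ·)] [Module ℝ X]
    [Lattice Y] [AddCommGroup Y]
    [CovariantClass Y Y (· + ·) (· ≤ ·)] [Module ℝ Y]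
    (T : X →ₗ[ℝ] Y) (hinj : Function.Injective T)
    (hβ : ∀ a b : X, narrower a b → narrower (T a) (T b))
    (x₁ x₂ : X) (h : disj (T x₁) (T x₂)) :
    T (|x₁| ⊓ |x₂|) = 0 ∧ |x₁| ⊓ |x₂| = 0 := by

  set u := |x₁| ⊓ |x₂| with hu
  have hu0 : (0:X) ≤ u := le_inf (abs_nonneg _) (abs_nonneg _)
  have habs : |u| = u := abs_of_nonneg hu0
  have hn : ∀ i : X, u ≤ |i| → narrower u i := by
    intro i hle z hz
    have hle' : |u| ≤ |i| := by rw [habs]; exact hle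
    have h1 : |z| ⊓ |u| ≤ |z| ⊓ |i| := inf_le_inf_left _ hle' 
    have h2 : (0:X) ≤ |z| ⊓ |u| := le_inf (abs_nonneg _) (abs_nonneg _)
    exact le_antisymm (hz ▸ h1) h2
  have hn1 := hβ u x₁ (hn x₁ inf_le_left)
  have hn2 := hβ u x₂ (hn x₂ inf_le_right)
  have hsymm : disj (T x₂) (T x₁) := by
    unfold disj at h ⊢; rwa [inf_comm]
  have hd2 : disj (T u) (T x₂) := by
    have := hn1 (T x₂) hsymm
    unfold disj at this ⊢; rwa [inf_comm]
  have hdd : disj (T u) (T u) := hn2 (T u) hd2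
  have hTu : T u = 0 := by
    have habs0 : |T u| = 0 := by
      have := hdd
      unfold disj at this
      rwa [inf_idem] at this
    have h1 : T u ≤ 0 := habs0 ▸ le_abs_self (T u)
    have h2 : (0:Y) ≤ T u := by
      have hneg : -(T u) ≤ |T u| := by
        rw [abs]; exact le_sup_right
      rw [habs0] at hneg
      simpa using hneg
    exact le_antisymm h1 h2
  refine ⟨hTu, hinj ?_⟩
  simpa using hTu
end
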